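/- Let T be a finite tree with at least two vertices and v a vertex of T. Then the mean subtree order of the forest T − v obtained by deleting v satisfies μ_{T−v} = (R_T − R_v)/(N_T − N_v) ≤ (N_v + 1)/3. -/

import Mathlib

/-!
Record, for a rooted tree, the number `n` and total order `r` of the subtrees through the root
and the number `m` and total order `M` of those avoiding it, so that `μ_{T−v} = M / m`. Joining
the roots of two rooted trees by an edge `uz` and keeping `u` as root combines these data by
explicit polynomial formulas: a subtree through `u` is a subtree through `u` on its side,
optionally glued along `uz` to a subtree through `z` on the other side, and a subtree avoiding
`u` lies entirely on one side. The four inequalities `1 ≤ n`, `2 (n + m) ≤ n (n + 1)`,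
`3 r ≤ n (n + 1) + n + m` and `3 M ≤ (n + 1) m` hold for a single vertex and survive this
gluing, and every tree arises from single vertices by repeated gluing (cut it at an edge through
the root). The last inequality is the theorem.
-/

variable {V : Type*}

/-- A subtree of a graph: a nonempty set of vertices inducing a connected subgraph. -/
def IsSubtree (G : SimpleGraph V) (s : Finset V) : Prop :=
  s.Nonempty ∧ (G.induce (s : Set V)).Connected

open Classical in
/-- `N_T`: the number of subtrees of `G`. -/
noncomputable def numSubtrees [Fintype V] (G : SimpleGraph V) : ℕ :=
  (Finset.univ.filter fun s : Finset V => IsSubtree G s).card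

open Classical in
/-- `R_T`: the sum of the orders of all subtrees of `G`. -/
noncomputable def sumSubtrees [Fintype V] (G : SimpleGraph V) : ℕ :=
  ∑ s ∈ Finset.univ.filter (fun s : Finset V => IsSubtree G s), s.card

open Classical in
/-- `N_v`: the number of subtrees of `G` containing `v`. -/
noncomputable def numSubtreesAt [Fintype V] (G : SimpleGraph V) (v : V) : ℕ :=
  (Finset.univ.filter fun s : Finset V => IsSubtree G s ∧ v ∈ s).card

open Classical in
/-- `R_v`: the sum of the orders of all subtrees of `G` containing `v`. -/
noncomputable def sumSubtreesAt [Fintype V] (G : SimpleGraph V) (v : V) : ℕ :=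
  ∑ s ∈ Finset.univ.filter (fun s : Finset V => IsSubtree G s ∧ v ∈ s), s.card

/-- `μ_T`: the mean subtree order (global mean) of `G`. -/
noncomputable def meanSubtreeOrder [Fintype V] (G : SimpleGraph V) : ℚ :=
  (sumSubtrees G : ℚ) / (numSubtrees G : ℚ)

/-- `μ_T(v)`: the local mean of `G` at `v`. -/
noncomputable def localMean [Fintype V] (G : SimpleGraph V) (v : V) : ℚ :=
  (sumSubtreesAt G v : ℚ) / (numSubtreesAt G v : ℚ)

/-- The tree obtained by contracting the edge `uv`: the vertex `v` is merged into `u`. -/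
def contractEdge (G : SimpleGraph V) (u v : V) : SimpleGraph {x : V // x ≠ v} where
  Adj a b := a ≠ b ∧ (G.Adj a.1 b.1 ∨ (a.1 = u ∧ G.Adj v b.1) ∨ (b.1 = u ∧ G.Adj v a.1))
  symm := by
    refine ⟨?_⟩
    rintro a b ⟨hne, h⟩
    refine ⟨hne.symm, ?_⟩
    rcases h with h | h | h
    · exact Or.inl h.symm
    · exact Or.inr (Or.inr h)
    · exact Or.inr (Or.inl h)
  loopless := by refine ⟨?_⟩; rintro a ⟨hne, -⟩; exact hne rfl

open Finset

/-- `numAt`, `sumAt`: the number and total order of the subtrees through the root (`N_v`, `R_v`);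
`numOff`, `sumOff`: the same for the subtrees avoiding the root (`N_T − N_v`, `R_T − R_v`). -/
structure RootedStats where
  numAt : ℕ
  sumAt : ℕ
  numOff : ℕ
  sumOff : ℕ

namespace RootedStats

/-- The data of the tree obtained by joining the root `u` of `s` to the root `z` of `t` by an edge,
rooted at `u`. -/
def glue (s t : RootedStats) : RootedStats where
  numAt := s.numAt * (t.numAt + 1)
  sumAt := s.sumAt * (t.numAt + 1) + s.numAt * t.sumAt
  numOff := s.numOff + (t.numAt + t.numOff)
  sumOff := s.sumOff + (t.sumAt + t.sumOff)

structure Bounded (s : RootedStats) : Prop where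
  one_le_numAt : 1 ≤ s.numAt
  two_mul_num_le : 2 * (s.numAt + s.numOff) ≤ s.numAt * (s.numAt + 1)
  three_mul_sumAt_le : 3 * s.sumAt ≤ s.numAt * (s.numAt + 1) + (s.numAt + s.numOff)
  three_mul_sumOff_le : 3 * s.sumOff ≤ (s.numAt + 1) * s.numOff

theorem Bounded.glue {s t : RootedStats} (hs : s.Bounded) (ht : t.Bounded) :
    (s.glue t).Bounded := by
  obtain ⟨n, r, m, M⟩ := s
  obtain ⟨a, q, k, K⟩ := t
  obtain ⟨hn, hs₂, hs₃, hs₄⟩ := hs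
  obtain ⟨ha, ht₂, ht₃, ht₄⟩ := ht
  dsimp only at *
  refine ⟨?_, ?_, ?_, ?_⟩ <;> dsimp only [RootedStats.glue] <;> zify at *
  · nlinarith
  · nlinarith [mul_le_mul hs₂ ht₂ (by positivity) (by positivity)]
  · have h₁ := mul_le_mul_of_nonneg_left hs₃ (by positivity : (0:ℤ) ≤ a + 1)
    have h₂ := mul_le_mul_of_nonneg_left ht₃ (by positivity : (0:ℤ) ≤ n)
    have h₃ := mul_le_mul_of_nonneg_left hs₂ (by positivity : (0:ℤ) ≤ a)
    have h₄ := mul_le_mul_of_nonneg_left ht₂ (by linarith : (0:ℤ) ≤ n - 1)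
    have h₅ : (0:ℤ) ≤ a * (n - 1) ^ 2 := by positivity
    have h₆ : (0:ℤ) ≤ (a * a) * ((2 * n - 1) * (n - 1)) :=
      mul_nonneg (by positivity) (mul_nonneg (by linarith) (by linarith))
    linarith
  · have hfar : (3:ℤ) * (q + K) ≤ (a + 2) * (a + k) := by linarith
    have h₁ : (0:ℤ) ≤ (n * a) * m := by positivity
    have h₂ : (0:ℤ) ≤ ((n - 1) * (a + 1)) * (a + k) :=
      mul_nonneg (mul_nonneg (by linarith) (by positivity)) (by positivity)
    linarith

theorem Bounded.sumOff_div_numOff_le {s : RootedStats} (hs : s.Bounded) :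
    (s.sumOff : ℚ) / s.numOff ≤ (s.numAt + 1) / 3 := by
  refine div_le_of_le_mul₀ (by positivity) (by positivity) ?_
  rw [div_mul_eq_mul_div, le_div_iff₀ (by norm_num)]
  exact_mod_cast (by linarith [hs.three_mul_sumOff_le] :
    s.sumOff * 3 ≤ (s.numAt + 1) * s.numOff)

end RootedStats

namespace SimpleGraph

variable {G : SimpleGraph V} {u z x : V}

/-- For `G` a tree and `u ~ z`, the far side of the edge `uz`. -/
def branch (G : SimpleGraph V) (u z : V) : Set V := {x | ∃ w : G.Walk z x, u ∉ w.support}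

theorem self_mem_branch (h : u ≠ z) : z ∈ G.branch u z := ⟨.nil, by simpa using h⟩

theorem notMem_branch : u ∉ G.branch u z := fun ⟨w, hw⟩ => hw w.end_mem_support

theorem mem_branch_of_walk {y : V} (hx : x ∈ G.branch u z) (w : G.Walk x y)
    (hw : u ∉ w.support) : y ∈ G.branch u z := by
  obtain ⟨p, hp⟩ := hx
  exact ⟨p.append w, by simp [hp, hw]⟩

theorem IsAcyclic.eq_of_adj_of_mem_branch (hG : G.IsAcyclic) (huz : G.Adj u z) {y : V}
    (huy : G.Adj u y) (hy : y ∈ G.branch u z) : y = z := by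
  obtain ⟨w, hw⟩ := hy
  have := isAcyclic_iff_forall_adj_isBridge.mp hG huy
  have hmem := isBridge_iff_forall_walk_mem_edges.mp this (.cons huz w)
  rw [Walk.edges_cons, List.mem_cons] at hmem
  rcases hmem with h | h
  · exact Sym2.congr_right.mp h
  · exact absurd (w.fst_mem_support_of_mem_edges h) hw

end SimpleGraph

section Subtrees

open Classical SimpleGraph

variable {G : SimpleGraph V} {s t : Finset V} {u z x : V}

theorem isSubtree_of_forall_walk (hu : u ∈ t)
    (h : ∀ x ∈ t, ∃ w : G.Walk u x, ∀ c ∈ w.support, c ∈ t) : IsSubtree G t := by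
  refine ⟨⟨u, hu⟩, G.induce_connected_of_patches u hu fun {x} hx => ?_⟩
  obtain ⟨w, hw⟩ := h x hx
  exact ⟨t, subset_rfl, hu, hx, ⟨w.induce _ hw⟩⟩

theorem isSubtree_singleton (u : V) : IsSubtree G {u} :=
  isSubtree_of_forall_walk (mem_singleton_self u) fun x hx => by
    obtain rfl := mem_singleton.mp hx
    exact ⟨.nil, by simp⟩

namespace IsSubtree

theorem exists_path (ht : IsSubtree G t) {y : V} (hx : x ∈ t) (hy : y ∈ t) :
    ∃ w : G.Walk x y, w.IsPath ∧ ∀ c ∈ w.support, c ∈ t := by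
  obtain ⟨w⟩ := ht.2 ⟨x, hx⟩ ⟨y, hy⟩
  let w' : G.Walk x y := w.map (SimpleGraph.Embedding.induce _).toHom
  refine ⟨w'.bypass, w'.bypass_isPath, fun c hc => ?_⟩
  obtain ⟨c', -, rfl⟩ :=
    List.mem_map.mp (Walk.support_map _ w ▸ w'.support_bypass_subset_support hc)
  exact c'.2

theorem exists_adj_walk (ht : IsSubtree G t) (hu : u ∈ t) (hx : x ∈ t) (hxu : x ≠ u) :
    ∃ y, G.Adj u y ∧ ∃ q : G.Walk y x, u ∉ q.support ∧ ∀ c ∈ q.support, c ∈ t := by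
  obtain ⟨p, hp, hpt⟩ := ht.exists_path hu hx
  obtain ⟨y, huy, q, rfl⟩ := Walk.exists_eq_cons_of_ne hxu.symm p
  exact ⟨y, huy, q, ((Walk.cons_isPath_iff huy q).mp hp).2,
    fun c hc => hpt c (by simp [hc])⟩

theorem union_of_adj (hs : IsSubtree G s) (ht : IsSubtree G t) (hu : u ∈ s) (hz : z ∈ t)
    (huz : G.Adj u z) : IsSubtree G (s ∪ t) :=
  ⟨hs.1.mono subset_union_left, by
    rw [coe_union]
    exact G.connected_induce_union hs.2.preconnected ht.2.preconnected hu hz huz⟩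

theorem forall_mem_branch_or_forall_notMem (ht : IsSubtree G t) (hu : u ∉ t) :
    (∀ x ∈ t, x ∈ G.branch u z) ∨ ∀ x ∈ t, x ∉ G.branch u z := by
  by_contra! ⟨⟨x, hxt, hx⟩, y, hyt, hy⟩
  obtain ⟨w, -, hwt⟩ := ht.exists_path hyt hxt
  exact hx (mem_branch_of_walk hy w fun h => hu (hwt u h))

theorem filter_notMem_branch (ht : IsSubtree G t) (hu : u ∈ t) :
    IsSubtree G (t.filter (· ∉ G.branch u z)) := by
  refine isSubtree_of_forall_walk (mem_filter.mpr ⟨hu, notMem_branch⟩) ?_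
  intro x hx
  rw [mem_filter] at hx
  by_cases hxu : x = u
  · subst hxu
    exact ⟨.nil, by simpa using hx⟩
  obtain ⟨y, huy, q, hqu, hqt⟩ := ht.exists_adj_walk hu hx.1 hxu
  have hq : ∀ c ∈ q.support, c ∉ G.branch u z := fun c hc hcB =>
    hx.2 (mem_branch_of_walk hcB (q.dropUntil c hc)
      fun h => hqu (q.support_dropUntil_subset_support hc h))
  refine ⟨.cons huy q, fun c hc => ?_⟩
  rw [Walk.support_cons, List.mem_cons] at hc
  rcases hc with rfl | hc
  · exact mem_filter.mpr ⟨hu, notMem_branch⟩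
  · exact mem_filter.mpr ⟨hqt c hc, hq c hc⟩

theorem exists_walk_in_branch (hG : G.IsAcyclic) (huz : G.Adj u z) (ht : IsSubtree G t)
    (hu : u ∈ t) (hx : x ∈ t) (hxB : x ∈ G.branch u z) :
    ∃ w : G.Walk z x, ∀ c ∈ w.support, c ∈ t ∧ c ∈ G.branch u z := by
  have hxu : x ≠ u := fun h => notMem_branch (h ▸ hxB)
  obtain ⟨y, huy, q, hqu, hqt⟩ := ht.exists_adj_walk hu hx hxu
  have hy : y ∈ G.branch u z :=
    mem_branch_of_walk hxB q.reverse (by simpa using hqu)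
  obtain rfl := hG.eq_of_adj_of_mem_branch huz huy hy
  exact ⟨q, fun c hc => ⟨hqt c hc, q.takeUntil c hc,
    fun h => hqu (q.support_takeUntil_subset_support hc h)⟩⟩

theorem filter_mem_branch (hG : G.IsAcyclic) (huz : G.Adj u z) (ht : IsSubtree G t)
    (hu : u ∈ t) (hz : z ∈ t) : IsSubtree G (t.filter (· ∈ G.branch u z)) := by
  refine isSubtree_of_forall_walk (mem_filter.mpr ⟨hz, self_mem_branch huz.ne⟩) ?_
  intro x hx
  rw [mem_filter] at hx
  obtain ⟨w, hw⟩ := ht.exists_walk_in_branch hG huz hu hx.1 hx.2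
  exact ⟨w, fun c hc => mem_filter.mpr (hw c hc)⟩

end IsSubtree

end Subtrees

section Counting

open Classical SimpleGraph

variable {G : SimpleGraph V} {A : Finset V} {u z : V}

noncomputable def subtreesIn (G : SimpleGraph V) (A : Finset V) : Finset (Finset V) :=
  A.powerset.filter (IsSubtree G)

theorem mem_subtreesIn {s : Finset V} : s ∈ subtreesIn G A ↔ s ⊆ A ∧ IsSubtree G s := by
  rw [subtreesIn, mem_filter, mem_powerset]

noncomputable def rootedStats (G : SimpleGraph V) (A : Finset V) (u : V) : RootedStats where
  numAt := #((subtreesIn G A).filter (u ∈ ·))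
  sumAt := ∑ s ∈ (subtreesIn G A).filter (u ∈ ·), #s
  numOff := #((subtreesIn G A).filter (u ∉ ·))
  sumOff := ∑ s ∈ (subtreesIn G A).filter (u ∉ ·), #s

theorem rootedStats_singleton (u : V) : rootedStats G {u} u = ⟨1, 1, 0, 0⟩ := by
  have : subtreesIn G {u} = {{u}} := by
    ext s
    simp only [mem_subtreesIn, subset_singleton_iff, mem_singleton]
    constructor
    · rintro ⟨rfl | rfl, hs⟩
      · exact absurd hs.1 not_nonempty_empty
      · rfl
    · rintro rfl
      exact ⟨Or.inr rfl, isSubtree_singleton u⟩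
  simp [rootedStats, this, filter_singleton]

theorem filter_notMem_subtreesIn :
    (subtreesIn G A).filter (u ∉ ·) =
      (subtreesIn G (A.filter (· ∉ G.branch u z))).filter (u ∉ ·) ∪
        subtreesIn G (A.filter (· ∈ G.branch u z)) := by
  ext s
  simp only [mem_union, mem_filter, mem_subtreesIn, subset_iff]
  constructor
  · rintro ⟨⟨hsA, hs⟩, hus⟩
    rcases hs.forall_mem_branch_or_forall_notMem hus with h | h
    · exact Or.inr ⟨fun x hx => ⟨hsA hx, h x hx⟩, hs⟩
    · exact Or.inl ⟨⟨fun x hx => ⟨hsA hx, h x hx⟩, hs⟩, hus⟩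
  · rintro (⟨⟨hsA, hs⟩, hus⟩ | ⟨hsA, hs⟩)
    · exact ⟨⟨fun x hx => (hsA hx).1, hs⟩, hus⟩
    · exact ⟨⟨fun x hx => (hsA hx).1, hs⟩, fun hu => notMem_branch (hsA hu).2⟩

theorem disjoint_subtreesIn_branch :
    Disjoint ((subtreesIn G (A.filter (· ∉ G.branch u z))).filter (u ∉ ·))
      (subtreesIn G (A.filter (· ∈ G.branch u z))) := by
  refine disjoint_left.mpr fun s hs hs' => ?_
  simp only [mem_filter, mem_subtreesIn, subset_iff] at hs hs'
  obtain ⟨x, hx⟩ := hs.1.2.1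
  exact (hs.1.1 hx).2 (hs'.1 hx).2

theorem filter_union_eq_of_forall {p : V → Prop} [DecidablePred p] {s t : Finset V}
    (hs : ∀ x ∈ s, ¬p x) (ht : ∀ x ∈ t, p x) :
    (s ∪ t).filter (¬p ·) = s ∧ (s ∪ t).filter p = t := by
  rw [filter_union, filter_union, filter_true_of_mem hs,
    filter_false_of_mem fun x hx => not_not.mpr (ht x hx), filter_false_of_mem hs,
    filter_true_of_mem ht, union_empty, empty_union]
  exact ⟨rfl, rfl⟩

theorem filter_mem_branch_mem_insert_empty (hG : G.IsAcyclic) (huz : G.Adj u z) {s : Finset V}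
    (hs : s ∈ (subtreesIn G A).filter (u ∈ ·)) :
    s.filter (· ∈ G.branch u z) ∈
      insert ∅ ((subtreesIn G (A.filter (· ∈ G.branch u z))).filter (z ∈ ·)) := by
  simp only [mem_filter, mem_subtreesIn] at hs
  obtain ⟨⟨hsA, hs⟩, hus⟩ := hs
  rcases (s.filter (· ∈ G.branch u z)).eq_empty_or_nonempty with h | ⟨x, hx⟩
  · exact h ▸ mem_insert_self _ _
  rw [mem_filter] at hx
  have hz : z ∈ s := (hs.exists_walk_in_branch hG huz hus hx.1 hx.2).elim
    fun w hw => (hw z w.start_mem_support).1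
  refine mem_insert_of_mem (mem_filter.mpr ⟨mem_subtreesIn.mpr ⟨filter_subset_filter _ hsA,
    hs.filter_mem_branch hG huz hus hz⟩, mem_filter.mpr ⟨hz, self_mem_branch huz.ne⟩⟩)

theorem subset_filter_of_mem_product {p : Finset V × Finset V}
    (hp : p ∈ (subtreesIn G (A.filter (· ∉ G.branch u z))).filter (u ∈ ·) ×ˢ
      insert ∅ ((subtreesIn G (A.filter (· ∈ G.branch u z))).filter (z ∈ ·))) :
    p.1 ⊆ A.filter (· ∉ G.branch u z) ∧ p.2 ⊆ A.filter (· ∈ G.branch u z) := by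
  obtain ⟨h₁, h₂⟩ := mem_product.mp hp
  refine ⟨(mem_subtreesIn.mp (mem_filter.mp h₁).1).1, ?_⟩
  rcases mem_insert.mp h₂ with h₂ | h₂
  · exact h₂ ▸ empty_subset _
  · exact (mem_subtreesIn.mp (mem_filter.mp h₂).1).1

/-- A subtree through `u` is cut by the edge `uz` into a subtree through `u` on the near side
and a possibly empty subtree through `z` on the far side. -/
theorem sum_filter_mem_subtreesIn (hG : G.IsAcyclic) (huz : G.Adj u z) {M : Type*}
    [AddCommMonoid M] (f : Finset V → M) :
    ∑ s ∈ (subtreesIn G A).filter (u ∈ ·), f s =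
      ∑ p ∈ (subtreesIn G (A.filter (· ∉ G.branch u z))).filter (u ∈ ·) ×ˢ
          insert ∅ ((subtreesIn G (A.filter (· ∈ G.branch u z))).filter (z ∈ ·)),
        f (p.1 ∪ p.2) := by
  have hunion (s : Finset V) :
      s.filter (· ∉ G.branch u z) ∪ s.filter (· ∈ G.branch u z) = s := by
    rw [union_comm]
    exact filter_union_filter_not_eq _ s
  refine sum_nbij' (fun s => (s.filter (· ∉ G.branch u z), s.filter (· ∈ G.branch u z)))
    (fun p => p.1 ∪ p.2) (fun s hs => ?_) (fun p hp => ?_) (fun s _ => hunion s)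
    (fun p hp => ?_) (fun s _ => by rw [hunion])
  · refine mem_product.mpr ⟨?_, filter_mem_branch_mem_insert_empty hG huz hs⟩
    simp only [mem_filter, mem_subtreesIn] at hs ⊢
    exact ⟨⟨filter_subset_filter _ hs.1.1, hs.1.2.filter_notMem_branch hs.2⟩, hs.2,
      notMem_branch⟩
  · obtain ⟨hp₁, hp₂⟩ := subset_filter_of_mem_product hp
    obtain ⟨h₁, h₂⟩ := mem_product.mp hp
    simp only [mem_filter, mem_subtreesIn] at h₁ ⊢
    refine ⟨⟨union_subset (hp₁.trans (filter_subset _ _)) (hp₂.trans (filter_subset _ _)),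
      ?_⟩, mem_union_left _ h₁.2⟩
    rcases mem_insert.mp h₂ with h₂ | h₂
    · rw [h₂, union_empty]
      exact h₁.1.2
    · simp only [mem_filter, mem_subtreesIn] at h₂
      exact h₁.1.2.union_of_adj h₂.1.2 h₁.2 h₂.2 huz
  · obtain ⟨hp₁, hp₂⟩ := subset_filter_of_mem_product hp
    obtain ⟨h₁, h₂⟩ := filter_union_eq_of_forall (p := (· ∈ G.branch u z))
      (fun x hx => (mem_filter.mp (hp₁ hx)).2) (fun x hx => (mem_filter.mp (hp₂ hx)).2)
    exact Prod.ext h₁ h₂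

theorem sum_card_union_product {X Y : Finset (Finset V)}
    (h : ∀ p ∈ X ×ˢ Y, Disjoint p.1 p.2) :
    ∑ p ∈ X ×ˢ Y, #(p.1 ∪ p.2) = (∑ s ∈ X, #s) * #Y + #X * ∑ t ∈ Y, #t := by
  rw [sum_congr rfl fun p hp => card_union_of_disjoint (h p hp), sum_product]
  simp only [sum_add_distrib, sum_const, smul_eq_mul, sum_mul, Nat.mul_comm #Y]

theorem rootedStats_eq_glue (hG : G.IsAcyclic) (huz : G.Adj u z) :
    rootedStats G A u = (rootedStats G (A.filter (· ∉ G.branch u z)) u).glue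
      (rootedStats G (A.filter (· ∈ G.branch u z)) z) := by
  have hempty : ∅ ∉ (subtreesIn G (A.filter (· ∈ G.branch u z))).filter (z ∈ ·) :=
    fun h => not_nonempty_empty (mem_subtreesIn.mp (mem_filter.mp h).1).2.1
  have hdisj : ∀ p ∈ (subtreesIn G (A.filter (· ∉ G.branch u z))).filter (u ∈ ·) ×ˢ
      insert ∅ ((subtreesIn G (A.filter (· ∈ G.branch u z))).filter (z ∈ ·)),
      Disjoint p.1 p.2 := fun p hp => (subset_filter_of_mem_product hp).elim fun h₁ h₂ =>
    disjoint_of_subset_left h₁ (disjoint_of_subset_right h₂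
      (disjoint_filter.mpr fun _ _ h h' => h h'))
  have hnum := sum_filter_mem_subtreesIn (A := A) hG huz (fun _ => 1)
  have hsum := sum_filter_mem_subtreesIn (A := A) hG huz card
  simp only [← card_eq_sum_ones, card_product, card_insert_of_notMem hempty] at hnum
  rw [sum_card_union_product hdisj, sum_insert hempty, card_insert_of_notMem hempty] at hsum
  simp only [rootedStats, RootedStats.glue, RootedStats.mk.injEq]
  refine ⟨hnum, by rw [hsum, card_empty, zero_add], ?_, ?_⟩
  · rw [filter_notMem_subtreesIn (z := z), card_union_of_disjoint disjoint_subtreesIn_branch,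
      card_filter_add_card_filter_not]
  · rw [filter_notMem_subtreesIn (z := z), sum_union disjoint_subtreesIn_branch,
      sum_filter_add_sum_filter_not]

end Counting

section Main

open Classical SimpleGraph

variable {G : SimpleGraph V}

theorem rootedStats_bounded (hG : G.IsAcyclic) {A : Finset V} {u : V} (hA : IsSubtree G A)
    (hu : u ∈ A) : (rootedStats G A u).Bounded := by
  induction A using Finset.strongInduction generalizing u with
  | H A ih =>
    by_cases hAu : A = {u}
    · subst hAu
      rw [rootedStats_singleton]
      exact ⟨le_rfl, le_rfl, le_rfl, le_rfl⟩
    obtain ⟨x, hxA, hxu⟩ : ∃ x ∈ A, x ≠ u := by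
      by_contra! h
      exact hAu (eq_singleton_iff_unique_mem.mpr ⟨hu, h⟩)
    obtain ⟨z, huz, q, -, hq⟩ := hA.exists_adj_walk hu hxA hxu
    have hz : z ∈ A := hq z q.start_mem_support
    rw [rootedStats_eq_glue hG huz]
    exact (ih _ (filter_ssubset.mpr ⟨z, hz, not_not.mpr (self_mem_branch huz.ne)⟩)
        (hA.filter_notMem_branch hu) (mem_filter.mpr ⟨hu, notMem_branch⟩)).glue
      (ih _ (filter_ssubset.mpr ⟨u, hu, notMem_branch⟩) (hA.filter_mem_branch hG huz hu hz)
        (mem_filter.mpr ⟨hz, self_mem_branch huz.ne⟩))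

theorem SimpleGraph.Connected.isSubtree_univ [Fintype V] (hG : G.Connected) :
    IsSubtree G univ := by
  refine ⟨univ_nonempty_iff.mpr hG.nonempty, ?_⟩
  rw [coe_univ]
  exact (induceUnivIso G).connected_iff.mpr hG

variable [Fintype V] (v : V)

theorem numSubtrees_eq_add :
    numSubtrees G = (rootedStats G univ v).numAt + (rootedStats G univ v).numOff := by
  rw [rootedStats, card_filter_add_card_filter_not, subtreesIn, powerset_univ, numSubtrees]

theorem sumSubtrees_eq_add :
    sumSubtrees G = (rootedStats G univ v).sumAt + (rootedStats G univ v).sumOff := by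
  rw [rootedStats, sum_filter_add_sum_filter_not, subtreesIn, powerset_univ, sumSubtrees]

theorem numSubtreesAt_eq : numSubtreesAt G v = (rootedStats G univ v).numAt := by
  rw [rootedStats, subtreesIn, powerset_univ, filter_filter, numSubtreesAt]

theorem sumSubtreesAt_eq : sumSubtreesAt G v = (rootedStats G univ v).sumAt := by
  rw [rootedStats, subtreesIn, powerset_univ, filter_filter, sumSubtreesAt]

end Main

theorem mean_subtree_order_delete_vertex_le_general
    [Fintype V] (G : SimpleGraph V) (hT : G.IsTree) (v : V) :
    ((sumSubtrees G : ℚ) - (sumSubtreesAt G v : ℚ)) /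
        ((numSubtrees G : ℚ) - (numSubtreesAt G v : ℚ)) ≤
      ((numSubtreesAt G v : ℚ) + 1) / 3 := by
  rw [numSubtrees_eq_add v, sumSubtrees_eq_add v, numSubtreesAt_eq, sumSubtreesAt_eq]
  push_cast
  rw [add_sub_cancel_left, add_sub_cancel_left]
  exact (rootedStats_bounded hT.isAcyclic hT.connected.isSubtree_univ
    (mem_univ v)).sumOff_div_numOff_le

/-- for a tree `T` with at least two vertices and a vertex `v`, the mean
subtree order of the forest `T − v`, namely `(R_T − R_v)/(N_T − N_v)`, is at most
`(N_v + 1)/3`. -/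
theorem mean_subtree_order_delete_vertex_le
    [Fintype V] (G : SimpleGraph V) (hT : G.IsTree) (hcard : 2 ≤ Fintype.card V) (v : V) :
    ((sumSubtrees G : ℚ) - (sumSubtreesAt G v : ℚ)) /
        ((numSubtrees G : ℚ) - (numSubtreesAt G v : ℚ)) ≤
      ((numSubtreesAt G v : ℚ) + 1) / 3 :=
  mean_subtree_order_delete_vertex_le_general G hT v
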